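/- (Proposition 4.3(3)) For any normed BPA system G = (V, Act, R) and all α, β, γ ∈ V*: αγ ~ βγ in L_G if and only if α ~_{R_γ} β, i.e. α and β are branching bisimilar in the LTS L_{G,R_γ}. -/

import Mathlib

/-! Common definitions: labelled transition systems, branching bisimulation,
branching bisimilarity, silent states, class-change norm, BPA systems,
right-to-left finite transducers. -/

/-- A τ-path `t = t₀ →τ t₁ →τ ⋯ →τ t_k` in which every state after `t₀`
is related to `s` by `B`. -/
inductive TauSeq {S Act : Type} (tr : S → Act → S → Prop) (τ : Act)
    (B : S → S → Prop) (s : S) : S → S → Prop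
  | refl (t : S) : TauSeq tr τ B s t t
  | step {t t' t'' : S} : tr t τ t' → B s t' → TauSeq tr τ B s t' t'' →
      TauSeq tr τ B s t t''

/-- `B` is a branching bisimulation in the LTS given by `tr` with silent action `τ`. -/
def IsBranchingBisim {S Act : Type} (tr : S → Act → S → Prop) (τ : Act)
    (B : S → S → Prop) : Prop :=
  ∀ s t, B s t →
    (∀ a s', tr s a s' →
      ((a = τ ∧ B s' t) ∨
        ∃ tk t', TauSeq tr τ B s t tk ∧ tr tk a t' ∧ B s' t')) ∧
    (∀ a t', tr t a t' →
      ((a = τ ∧ B s t') ∨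
        ∃ sk s', TauSeq tr τ (fun u v => B v u) t s sk ∧ tr sk a s' ∧ B s' t'))

/-- Branching bisimilarity: `s ~ t` iff some branching bisimulation contains `(s,t)`. -/
def BBisim {S Act : Type} (tr : S → Act → S → Prop) (τ : Act) (s t : S) : Prop :=
  ∃ B, IsBranchingBisim tr τ B ∧ B s t

/-- `Steps tr s w t`: there is a path from `s` to `t` labelled by the word `w`. -/
inductive Steps {S Act : Type} (tr : S → Act → S → Prop) : S → List Act → S → Prop
  | refl (s : S) : Steps tr s [] s
  | step {s : S} {a : Act} {s' : S} {w : List Act} {t : S} :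
      tr s a s' → Steps tr s' w t → Steps tr s (a :: w) t

/-- A state is silent if only τ-labelled words can be performed from it. -/
def SilentState {S Act : Type} (tr : S → Act → S → Prop) (τ : Act) (s : S) : Prop :=
  ∀ w s', Steps tr s w s' → ∀ a ∈ w, a = τ

/-- A τ-path in which no transition is class-changing (each step stays in the same
`~`-class). -/
inductive TauNC {S Act : Type} (tr : S → Act → S → Prop) (τ : Act) : S → S → Prop
  | refl (t : S) : TauNC tr τ t t
  | step {t t' t'' : S} : tr t τ t' → BBisim tr τ t t' → TauNC tr τ t' t'' →
      TauNC tr τ t t''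

/-- `CCPath tr τ s n t`: there is a path from `s` to `t` containing exactly `n`
class-changing transitions. -/
inductive CCPath {S Act : Type} (tr : S → Act → S → Prop) (τ : Act) : S → ℕ → S → Prop
  | refl (s : S) : CCPath tr τ s 0 s
  | stepEq {s : S} {a : Act} {s' : S} {n : ℕ} {t : S} :
      tr s a s' → BBisim tr τ s s' → CCPath tr τ s' n t → CCPath tr τ s n t
  | stepNe {s : S} {a : Act} {s' : S} {n : ℕ} {t : S} :
      tr s a s' → ¬ BBisim tr τ s s' → CCPath tr τ s' n t → CCPath tr τ s (n + 1) t

/-- The class-change norm: the least number of class-changing transitions on a path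
to a silent state; `⊤` (ω) if no silent state is reachable. -/
noncomputable def ccNorm {S Act : Type} (tr : S → Act → S → Prop) (τ : Act) (s : S) : ℕ∞ :=
  sInf {n : ℕ∞ | ∃ ℓ : ℕ, n = (ℓ : ℕ∞) ∧ ∃ t, CCPath tr τ s ℓ t ∧ SilentState tr τ t}

/-- A BPA system: a finite set of rules `A →a α` (a context-free grammar in
Greibach normal form, no starting variable). -/
structure BPA (V Act : Type) where
  rules : Finset (V × Act × List V)

/-- The transition relation of the LTS `L_G` associated with a BPA system `G`:
`Aβ →a γβ` whenever `A →a γ` is a rule. -/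
def BPA.tr {V Act : Type} (G : BPA V Act) : List V → Act → List V → Prop :=
  fun s a t => ∃ (A : V) (γ β : List V), (A, a, γ) ∈ G.rules ∧ s = A :: β ∧ t = γ ++ β

/-- The (standard, syntactic) norm of a process: the length of a shortest word
leading to the empty process; `⊤` (ω) if there is none. -/
noncomputable def BPA.norm {V Act : Type} (G : BPA V Act) (α : List V) : ℕ∞ :=
  sInf {n : ℕ∞ | ∃ w : List Act, n = (w.length : ℕ∞) ∧ Steps G.tr α w []}

/-- A BPA system is normed if every variable has a finite norm. -/
def BPA.Normed {V Act : Type} (G : BPA V Act) : Prop :=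
  ∀ A : V, G.norm [A] ≠ ⊤

/-- The transition relation of `L_{G,R}`: as `L_G`, but all outgoing transitions of
states in `R*` are removed. -/
def BPA.trR {V Act : Type} (G : BPA V Act) (R : Set V) : List V → Act → List V → Prop :=
  fun s a t => G.tr s a t ∧ ¬ (∀ X ∈ s, X ∈ R)

/-- `R_γ`: the set of variables redundant w.r.t. `γ`, i.e. those `X` with `Xγ ~ γ`. -/
def RedSet {V Act : Type} (G : BPA V Act) (τ : Act) (γ : List V) : Set V :=
  {X : V | BBisim G.tr τ (X :: γ) γ}

/-- `α` is a redundancy-free prefix of `αγ`: it cannot be written as `δXβ` with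
`Xβγ ~ βγ`. -/
def RedFreePrefix {V Act : Type} (G : BPA V Act) (τ : Act) (α γ : List V) : Prop :=
  ¬ ∃ (δ : List V) (X : V) (β : List V),
      α = δ ++ X :: β ∧ BBisim G.tr τ (X :: (β ++ γ)) (β ++ γ)

/-- A finite-state transducer reading (and writing) from right to left. -/
structure Transducer (Q V : Type) where
  delta : Q → V → Q × List V
  q0 : Q

/-- Running the transducer on an input string, right to left:
`T.run α q = (q', β)` means `q' ⇐α|β= q`. -/
def Transducer.run {Q V : Type} (T : Transducer Q V) : List V → Q → Q × List V
  | [], q => (q, [])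
  | A :: α, q =>
      let p := T.run α q
      ((T.delta p.1 A).1, (T.delta p.1 A).2 ++ p.2)

/-- `T_q(α)`: the output of `T` on input `α`, started in state `q`. -/
def Transducer.out {Q V : Type} (T : Transducer Q V) (q : Q) (α : List V) : List V :=
  (T.run α q).2

/-- `q`-normal forms: `ε ∈ NF_q`, and `αA ∈ NF_q` iff `A` is a `q`-prime and
`α` is a `q'`-normal form where `q' ⇐A|A= q`. -/
inductive Transducer.NF {Q V : Type} (T : Transducer Q V) : Q → List V → Prop
  | nil (q : Q) : Transducer.NF T q []
  | snoc {q : Q} {A : V} {α : List V} :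
      (T.delta q A).2 = [A] → Transducer.NF T (T.delta q A).1 α →
      Transducer.NF T q (α ++ [A])

/-- A normal-form-computing (nfc) transducer: each `T_q(A)` is a `q`-normal form,
and `q' ⇐A|γ= q` implies `q' ⇐γ|γ= q`. -/
def Transducer.IsNFC {Q V : Type} (T : Transducer Q V) : Prop :=
  ∀ (q : Q) (A : V),
    Transducer.NF T q (T.delta q A).2 ∧ T.run (T.delta q A).2 q = T.delta q A

/-- A τ-path in `L_G` along which the `T_q`-output stays constant. -/
inductive ConstTauSeq {Q V Act : Type} (tr : List V → Act → List V → Prop) (τ : Act)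
    (T : Transducer Q V) (q : Q) : List V → List V → Prop
  | refl (α : List V) : ConstTauSeq tr τ T q α α
  | step {α α' α'' : List V} : tr α τ α' → T.out q α' = T.out q α →
      ConstTauSeq tr τ T q α' α'' → ConstTauSeq tr τ T q α α''

/-- The long move `α ⇒a_q β`. -/
def BigStep {Q V Act : Type} (G : BPA V Act) (τ : Act) (T : Transducer Q V) (q : Q)
    (α : List V) (a : Act) (β : List V) : Prop :=
  (a = τ ∧ β = T.out q α) ∨
  ∃ αk β', ConstTauSeq G.tr τ T q α αk ∧ G.tr αk a β' ∧ β = T.out q β'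

/-- The equivalence `α₁ ≈_q α₂`: the same long moves are available. -/
def TApprox {Q V Act : Type} (G : BPA V Act) (τ : Act) (T : Transducer Q V) (q : Q)
    (α₁ α₂ : List V) : Prop :=
  ∀ a β, BigStep G τ T q α₁ a β ↔ BigStep G τ T q α₂ a β

/-- Consistency of an nfc-transducer with a BPA system (Definition 4.1). -/
def ConsistentWith {Q V Act : Type} (T : Transducer Q V) (G : BPA V Act) (τ : Act) : Prop :=
  (∀ A : V, T.out T.q0 [A] = [] → TApprox G τ T T.q0 [A] []) ∧
  (∀ (q : Q) (A : V), T.out q [A] ≠ [] → TApprox G τ T q [A] (T.out q [A])) ∧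
  (∀ (q : Q) (A C : V), T.out q [A, C] = [C] → T.out q [C] = [C] →
    TApprox G τ T q [A, C] [C])

/-!
If `δ ∉ R_γ*` then `δγ ≁ γ`: when `δγ ~ γ`, a path from `δγ` to `ε` with the fewest
class-changing transitions spends all of them after reaching `γ` (normedness provides such
paths and `ε` is reached through every suffix), so every suffix `ηγ` of `δγ` is `~ γ`, and
with it every `Xγ` for `X` in `δ`. Hence along a `~`-matching path from `ηγ` to a move of `δγ`
with `δ ∉ R_γ*` every state is `η'γ` with `η' ∉ R_γ*`, and the path projects to `L_{G,R_γ}`: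
`{(δ, η) | δγ ~ ηγ}` is a branching bisimulation there. Conversely a branching bisimulation of
`L_{G,R_γ}` lifts by appending `γ`, except at pairs with a side `d ∈ R_γ*`; but `d` is
deadlocked in `L_{G,R_γ}`, so its partner can only `τ`-step towards `R_γ*` and both sides are
`~ γ` after appending `γ`.
-/

section BranchingBisimilarity

variable {S Act : Type} {tr : S → Act → S → Prop} {τ : Act}

abbrev TauReach (tr : S → Act → S → Prop) (τ : Act) : S → S → Prop :=
  Relation.ReflTransGen fun x y => tr x τ y

/-- One half of the transfer condition of a branching bisimulation `B` at the pair `(s, t)`;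
`IsBranchingBisim tr τ B` says that `BranchingTransfer tr τ B s t` and
`BranchingTransfer tr τ (flip B) t s` hold whenever `B s t`. -/
def BranchingTransfer (tr : S → Act → S → Prop) (τ : Act) (B : S → S → Prop) (s t : S) :
    Prop :=
  ∀ a s', tr s a s' →
    (a = τ ∧ B s' t) ∨ ∃ tk t', TauSeq tr τ B s t tk ∧ tr tk a t' ∧ B s' t'

theorem TauSeq.mono {B B' : S → S → Prop} {s t tk : S} (hBB' : ∀ v, B s v → B' s v)
    (h : TauSeq tr τ B s t tk) : TauSeq tr τ B' s t tk := by
  induction h with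
  | refl => exact .refl _
  | step hstep hB _ ih => exact .step hstep (hBB' _ hB) ih

theorem TauSeq.trans {B : S → S → Prop} {s t u v : S}
    (h₁ : TauSeq tr τ B s t u) (h₂ : TauSeq tr τ B s u v) : TauSeq tr τ B s t v := by
  induction h₁ with
  | refl => exact h₂
  | step hstep hB _ ih => exact .step hstep hB (ih h₂)

theorem TauSeq.rel_end {B : S → S → Prop} {s t tk : S}
    (h : TauSeq tr τ B s t tk) (hst : B s t) : B s tk := by
  induction h with
  | refl => exact hst
  | step _ hB _ ih => exact ih hB

theorem TauSeq.tauReach {B : S → S → Prop} {s t tk : S} (h : TauSeq tr τ B s t tk) :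
    TauReach tr τ t tk := by
  induction h with
  | refl => exact .refl
  | step hstep _ _ ih => exact .head hstep ih

theorem BranchingTransfer.mono {B B' : S → S → Prop} (hBB' : ∀ u v, B u v → B' u v)
    {s t : S} (h : BranchingTransfer tr τ B s t) : BranchingTransfer tr τ B' s t := by
  intro a s' hs
  rcases h a s' hs with ⟨ha, h'⟩ | ⟨tk, t', hseq, ht, h'⟩
  · exact .inl ⟨ha, hBB' _ _ h'⟩
  · exact .inr ⟨tk, t', hseq.mono (hBB' s), ht, hBB' _ _ h'⟩

theorem isBranchingBisim_of_symm {B : S → S → Prop} (hsymm : ∀ s t, B s t → B t s)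
    (h : ∀ s t, B s t → BranchingTransfer tr τ B s t) : IsBranchingBisim tr τ B :=
  fun s t hst => ⟨h s t hst, (h t s (hsymm s t hst)).mono hsymm⟩

theorem bbisim_refl (s : S) : BBisim tr τ s s :=
  ⟨Eq, isBranchingBisim_of_symm (fun _ _ => Eq.symm) (by
    rintro s _ rfl a s' hs
    exact .inr ⟨s, s', .refl s, hs, rfl⟩), rfl⟩

theorem bbisim_symm {s t : S} (h : BBisim tr τ s t) : BBisim tr τ t s := by
  obtain ⟨B, hB, hst⟩ := h
  exact ⟨flip B, fun u v huv => (hB v u huv).symm, hst⟩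

theorem BBisim.transfer {s t : S} (h : BBisim tr τ s t) :
    BranchingTransfer tr τ (BBisim tr τ) s t := by
  obtain ⟨B, hB, hst⟩ := h
  exact BranchingTransfer.mono (fun u v huv => ⟨B, hB, huv⟩) (hB s t hst).1

theorem bbisim_of_transfer_up_to {R : S → S → Prop} (hsymm : ∀ s t, R s t → R t s)
    (h : ∀ s t, R s t → BranchingTransfer tr τ (fun u v => R u v ∨ BBisim tr τ u v) s t)
    {s t : S} (hst : R s t) : BBisim tr τ s t := by
  refine ⟨fun u v => R u v ∨ BBisim tr τ u v, isBranchingBisim_of_symm ?_ ?_, .inl hst⟩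
  · rintro u v (huv | huv)
    exacts [.inl (hsymm u v huv), .inr (bbisim_symm huv)]
  · rintro u v (huv | huv)
    exacts [h u v huv, huv.transfer.mono fun _ _ => .inr]

theorem BBisim.tr_of_dead {s d s' : S} {a : Act} (h : BBisim tr τ s d)
    (hd : ∀ a u, ¬ tr d a u) (hs : tr s a s') : a = τ ∧ BBisim tr τ s' d := by
  rcases h.transfer a s' hs with h' | ⟨dk, d', hseq, hdk, _⟩
  · exact h'
  · cases hseq with
    | refl => exact absurd hdk (hd _ _)
    | step hstep _ _ => exact absurd hstep (hd _ _)

end BranchingBisimilarity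

section Transitivity

variable {S Act : Type} {tr : S → Act → S → Prop} {τ : Act}

/-- The transfer condition of a semi-branching bisimulation (Basten): the `τ`-path before
the matching step only has to be related at its end. -/
def SemiBranchingTransfer (tr : S → Act → S → Prop) (τ : Act) (B : S → S → Prop) (s t : S) :
    Prop :=
  ∀ a s', tr s a s' → ∃ tk, TauReach tr τ t tk ∧ B s tk ∧
    ((a = τ ∧ B s' tk) ∨ ∃ t', tr tk a t' ∧ B s' t')

def IsSemiBranchingBisim (tr : S → Act → S → Prop) (τ : Act) (B : S → S → Prop) : Prop :=
  ∀ s t, B s t → SemiBranchingTransfer tr τ B s t ∧ SemiBranchingTransfer tr τ (flip B) t s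

def SemiBBisim (tr : S → Act → S → Prop) (τ : Act) (s t : S) : Prop :=
  ∃ B, IsSemiBranchingBisim tr τ B ∧ B s t

theorem SemiBranchingTransfer.mono {B B' : S → S → Prop} (hBB' : ∀ u v, B u v → B' u v)
    {s t : S} (h : SemiBranchingTransfer tr τ B s t) : SemiBranchingTransfer tr τ B' s t := by
  intro a s' hs
  obtain ⟨tk, hr, hk, h'⟩ := h a s' hs
  refine ⟨tk, hr, hBB' _ _ hk, h'.imp (And.imp_right (hBB' _ _)) ?_⟩
  exact fun ⟨t', ht, h''⟩ => ⟨t', ht, hBB' _ _ h''⟩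

theorem BranchingTransfer.semiBranchingTransfer {B : S → S → Prop} {s t : S}
    (h : BranchingTransfer tr τ B s t) (hst : B s t) : SemiBranchingTransfer tr τ B s t := by
  intro a s' hs
  rcases h a s' hs with ⟨ha, h'⟩ | ⟨tk, t', hseq, ht, h'⟩
  · exact ⟨t, .refl, hst, .inl ⟨ha, h'⟩⟩
  · exact ⟨tk, hseq.tauReach, hseq.rel_end hst, .inr ⟨t', ht, h'⟩⟩

theorem IsBranchingBisim.isSemiBranchingBisim {B : S → S → Prop}
    (hB : IsBranchingBisim tr τ B) : IsSemiBranchingBisim tr τ B := fun s t hst =>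
  ⟨BranchingTransfer.semiBranchingTransfer (hB s t hst).1 hst,
    BranchingTransfer.semiBranchingTransfer (hB s t hst).2 hst⟩

theorem IsSemiBranchingBisim.flip {B : S → S → Prop} (hB : IsSemiBranchingBisim tr τ B) :
    IsSemiBranchingBisim tr τ (flip B) := fun s t hst => (hB t s hst).symm

theorem IsSemiBranchingBisim.exists_tauReach {B : S → S → Prop}
    (hB : IsSemiBranchingBisim tr τ B) {s t t₁ : S} (hst : B s t) (ht : TauReach tr τ t t₁) :
    ∃ s₁, TauReach tr τ s s₁ ∧ B s₁ t₁ := by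
  induction ht with
  | refl => exact ⟨s, .refl, hst⟩
  | tail _ hstep ih =>
    obtain ⟨s₁, hr, h₁⟩ := ih
    obtain ⟨sk, hr', _, ⟨_, hk⟩ | ⟨s', hs', h'⟩⟩ := (hB _ _ h₁).2 _ _ hstep
    · exact ⟨sk, hr.trans hr', hk⟩
    · exact ⟨s', (hr.trans hr').tail hs', h'⟩

theorem SemiBranchingTransfer.comp {B₁ B₂ : S → S → Prop}
    (h₁ : IsSemiBranchingBisim tr τ B₁) (h₂ : IsSemiBranchingBisim tr τ B₂) {s t u : S}
    (hst : B₁ s t) (htu : B₂ t u) : SemiBranchingTransfer tr τ (Relation.Comp B₁ B₂) s u := by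
  intro a s' hs
  obtain ⟨tk, hr, hk, hmatch⟩ := (h₁ s t hst).1 a s' hs
  obtain ⟨uk, hru, hku⟩ := h₂.flip.exists_tauReach htu hr
  rcases hmatch with ⟨rfl, h'⟩ | ⟨t', ht, h'⟩
  · exact ⟨uk, hru, ⟨tk, hk, hku⟩, .inl ⟨rfl, tk, h', hku⟩⟩
  · obtain ⟨ul, hru', hkl, hmatch'⟩ := (h₂ tk uk hku).1 a t' ht
    refine ⟨ul, hru.trans hru', ⟨tk, hk, hkl⟩, ?_⟩
    rcases hmatch' with ⟨rfl, h''⟩ | ⟨u', hu, h''⟩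
    exacts [.inl ⟨rfl, t', h', h''⟩, .inr ⟨u', hu, t', h', h''⟩]

theorem IsSemiBranchingBisim.comp {B₁ B₂ : S → S → Prop} (h₁ : IsSemiBranchingBisim tr τ B₁)
    (h₂ : IsSemiBranchingBisim tr τ B₂) : IsSemiBranchingBisim tr τ (Relation.Comp B₁ B₂) :=
  fun _ _ ⟨_, hst, htu⟩ =>
    ⟨.comp h₁ h₂ hst htu, (SemiBranchingTransfer.comp h₂.flip h₁.flip htu hst).mono
      fun _ _ ⟨t, h, h'⟩ => ⟨t, h', h⟩⟩

theorem isSemiBranchingBisim_semiBBisim : IsSemiBranchingBisim tr τ (SemiBBisim tr τ) := by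
  rintro s t ⟨B, hB, hst⟩
  exact ⟨((hB s t hst).1).mono fun _ _ h => ⟨B, hB, h⟩,
    ((hB s t hst).2).mono fun _ _ h => ⟨B, hB, h⟩⟩

theorem semiBBisim_symm {s t : S} (h : SemiBBisim tr τ s t) : SemiBBisim tr τ t s := by
  obtain ⟨B, hB, hst⟩ := h
  exact ⟨flip B, hB.flip, hst⟩

theorem semiBBisim_stutter {s t₀ t t₁ : S} (h₀ : TauReach tr τ t₀ t)
    (h₁ : TauReach tr τ t t₁) (hs₀ : SemiBBisim tr τ s t₀) (hs₁ : SemiBBisim tr τ s t₁) :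
    SemiBBisim tr τ s t := by
  let B : S → S → Prop := fun u v => SemiBBisim tr τ u v ∨
    ∃ v₀ v₁, TauReach tr τ v₀ v ∧ TauReach tr τ v v₁ ∧
      SemiBBisim tr τ u v₀ ∧ SemiBBisim tr τ u v₁
  refine ⟨B, ?_, .inr ⟨t₀, t₁, h₀, h₁, hs₀, hs₁⟩⟩
  rintro u v (huv | ⟨v₀, v₁, hr₀, hr₁, hu₀, hu₁⟩)
  · exact ⟨(isSemiBranchingBisim_semiBBisim u v huv).1.mono fun _ _ => .inl,
      (isSemiBranchingBisim_semiBBisim u v huv).2.mono fun _ _ => .inl⟩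
  constructor
  · intro a u' hu
    obtain ⟨vk, hr, hk, hmatch⟩ := (isSemiBranchingBisim_semiBBisim u v₁ hu₁).1 a u' hu
    exact ⟨vk, hr₁.trans hr, .inl hk, hmatch.imp (And.imp_right .inl)
      fun ⟨v', hv, h'⟩ => ⟨v', hv, .inl h'⟩⟩
  · intro a v' hv
    obtain ⟨u₁, hru, hu₁v⟩ := isSemiBranchingBisim_semiBBisim.exists_tauReach hu₀ hr₀
    obtain ⟨uk, hr, hk, hmatch⟩ := (isSemiBranchingBisim_semiBBisim u₁ v hu₁v).2 a v' hv
    exact ⟨uk, hru.trans hr, .inl hk, hmatch.imp (And.imp_right .inl)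
      fun ⟨u', hu', h'⟩ => ⟨u', hu', .inl h'⟩⟩

theorem tauSeq_semiBBisim_of_tauReach {s t tk : S} (hr : TauReach tr τ t tk)
    (hst : SemiBBisim tr τ s t) (hsk : SemiBBisim tr τ s tk) :
    TauSeq tr τ (SemiBBisim tr τ) s t tk := by
  induction hr using Relation.ReflTransGen.head_induction_on with
  | refl => exact .refl tk
  | head hstep hrest ih =>
    have hs' := semiBBisim_stutter (.single hstep) hrest hst hsk
    exact .step hstep hs' (ih hs')

theorem isBranchingBisim_semiBBisim : IsBranchingBisim tr τ (SemiBBisim tr τ) := by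
  refine isBranchingBisim_of_symm (fun _ _ => semiBBisim_symm) fun s t hst a s' hs => ?_
  obtain ⟨tk, hr, hk, hmatch⟩ := (isSemiBranchingBisim_semiBBisim s t hst).1 a s' hs
  rcases hmatch with ⟨ha, h'⟩ | ⟨t', ht, h'⟩
  · rcases hr.cases_tail with rfl | ⟨u, hru, hstep⟩
    · exact .inl ⟨ha, h'⟩
    · have hsu := semiBBisim_stutter hru (.single hstep) hst hk
      exact .inr ⟨u, tk, tauSeq_semiBBisim_of_tauReach hru hst hsu, ha ▸ hstep, h'⟩
  · exact .inr ⟨tk, t', tauSeq_semiBBisim_of_tauReach hr hst hk, ht, h'⟩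

/-- A composition of branching bisimulations need not be one, but it is semi-branching, and the
largest semi-branching bisimulation is branching by stuttering. -/
theorem bbisim_trans {s t u : S} (hst : BBisim tr τ s t) (htu : BBisim tr τ t u) :
    BBisim tr τ s u := by
  obtain ⟨B₁, hB₁, hst⟩ := hst
  obtain ⟨B₂, hB₂, htu⟩ := htu
  exact ⟨SemiBBisim tr τ, isBranchingBisim_semiBBisim,
    _, hB₁.isSemiBranchingBisim.comp hB₂.isSemiBranchingBisim, t, hst, htu⟩

end Transitivity

section ClassChanges

variable {S Act : Type} {tr : S → Act → S → Prop} {τ : Act}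

theorem Steps.trans {s t u : S} {w₁ w₂ : List Act}
    (h₁ : Steps tr s w₁ t) (h₂ : Steps tr t w₂ u) : Steps tr s (w₁ ++ w₂) u := by
  induction h₁ with
  | refl => exact h₂
  | step hstep _ ih => exact .step hstep (ih h₂)

theorem CCPath.trans {s t u : S} {m n : ℕ} (h₁ : CCPath tr τ s m t) (h₂ : CCPath tr τ t n u) :
    CCPath tr τ s (m + n) u := by
  induction h₁ with
  | refl => simpa using h₂
  | stepEq hstep hbb _ ih => exact .stepEq hstep hbb (ih h₂)
  | stepNe hstep hbb _ ih => exact Nat.add_right_comm _ 1 n ▸ .stepNe hstep hbb (ih h₂)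

theorem CCPath.bbisim_of_zero {s t : S} (h : CCPath tr τ s 0 t) : BBisim tr τ s t := by
  generalize hn : 0 = n at h
  induction h with
  | refl => exact bbisim_refl _
  | stepEq _ hbb _ ih => exact bbisim_trans hbb (ih hn)
  | stepNe => omega

theorem CCPath.exists_of_steps {s t : S} {w : List Act} (h : Steps tr s w t) :
    ∃ n, CCPath tr τ s n t := by
  induction h with
  | refl => exact ⟨0, .refl _⟩
  | @step s a s' _ _ hstep _ ih =>
    obtain ⟨n, hn⟩ := ih
    by_cases hbb : BBisim tr τ s s'
    exacts [⟨n, .stepEq hstep hbb hn⟩, ⟨n + 1, .stepNe hstep hbb hn⟩]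

theorem TauSeq.ccPath_zero {s t tk : S} (h : TauSeq tr τ (BBisim tr τ) s t tk)
    (hst : BBisim tr τ s t) : CCPath tr τ t 0 tk := by
  induction h with
  | refl => exact .refl _
  | step hstep hB _ ih => exact .stepEq hstep (bbisim_trans (bbisim_symm hst) hB) (ih hB)

theorem CCPath.transfer {s s' t : S} {n : ℕ} (h : CCPath tr τ s n s') (hst : BBisim tr τ s t) :
    ∃ t', CCPath tr τ t n t' ∧ BBisim tr τ s' t' := by
  induction h generalizing t with
  | refl => exact ⟨t, .refl t, hst⟩
  | stepEq _ hbb _ ih => exact ih (bbisim_trans (bbisim_symm hbb) hst)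
  | stepNe hstep hne _ ih =>
    rcases hst.transfer _ _ hstep with ⟨_, h'⟩ | ⟨tk, t₁, hseq, htk, h'⟩
    · exact absurd (bbisim_trans hst (bbisim_symm h')) hne
    obtain ⟨t', hc, hs'⟩ := ih h'
    have hsk := hseq.rel_end hst
    have hne' : ¬ BBisim tr τ tk t₁ := fun hk =>
      hne (bbisim_trans hsk (bbisim_trans hk (bbisim_symm h')))
    exact ⟨t', by simpa using (hseq.ccPath_zero hst).trans (.stepNe htk hne' hc), hs'⟩

theorem CCPath.zero_of_steps_of_bbisim_dead {s t d : S} {w : List Act} (h : Steps tr s w t)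
    (hsd : BBisim tr τ s d) (hd : ∀ a u, ¬ tr d a u) : CCPath tr τ s 0 t := by
  induction h with
  | refl => exact .refl _
  | step hstep _ ih =>
    have hs' := (hsd.tr_of_dead hd hstep).2
    exact .stepEq hstep (bbisim_trans hsd (bbisim_symm hs')) (ih hs')

end ClassChanges

section TauClosed

variable {S Act : Type} {tr : S → Act → S → Prop} {τ : Act}

theorem exists_tauSeq_of_steps {P : S → Prop} {u : S}
    (hmove : ∀ s, P s → ∀ a s', tr s a s' → a = τ ∧ (P s' ∨ BBisim tr τ s' u))
    {s t b : S} {w : List Act} (h : Steps tr s w t) (hs : P s) (ht : BBisim tr τ t u) :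
    ∃ sk, TauSeq tr τ (fun _ v => P v ∨ BBisim tr τ v u) b s sk ∧ BBisim tr τ sk u := by
  induction h with
  | refl => exact ⟨_, .refl _, ht⟩
  | step hstep _ ih =>
    obtain ⟨rfl, hs' | hs'⟩ := hmove _ hs _ _ hstep
    · obtain ⟨sk, hseq, hk⟩ := ih hs' ht
      exact ⟨sk, .step hstep (.inl hs') hseq, hk⟩
    · exact ⟨_, .step hstep (.inr hs') (.refl _), hs'⟩

theorem bbisim_of_tau_closed {P : S → Prop} {u : S}
    (hmove : ∀ s, P s → ∀ a s', tr s a s' → a = τ ∧ (P s' ∨ BBisim tr τ s' u))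
    (hreach : ∀ s, P s → ∃ w t, Steps tr s w t ∧ BBisim tr τ t u)
    {s : S} (hs : P s) : BBisim tr τ s u := by
  let R : S → S → Prop := fun x y => (P x ∧ BBisim tr τ y u) ∨ (P y ∧ BBisim tr τ x u)
  refine bbisim_of_transfer_up_to (R := R) (fun _ _ => Or.symm) ?_ (.inl ⟨hs, bbisim_refl u⟩)
  rintro x y (⟨hx, hy⟩ | ⟨hy, hx⟩) a x' hmv
  · obtain ⟨rfl, hx' | hx'⟩ := hmove x hx a x' hmv
    exacts [.inl ⟨rfl, .inl (.inl ⟨hx', hy⟩)⟩,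
      .inl ⟨rfl, .inr (bbisim_trans hx' (bbisim_symm hy))⟩]
  · obtain ⟨w, t, ht, htu⟩ := hreach y hy
    obtain ⟨yk, hseq, hk⟩ := exists_tauSeq_of_steps (b := x) hmove ht hy htu
    have hseq' : TauSeq tr τ (fun v w => R v w ∨ BBisim tr τ v w) x y yk :=
      hseq.mono fun v hv => hv.elim (fun hv => .inl (.inr ⟨hv, hx⟩))
        fun hv => .inr (bbisim_trans hx (bbisim_symm hv))
    rcases (bbisim_trans hx (bbisim_symm hk)).transfer a x' hmv with
      ⟨ha, h'⟩ | ⟨yl, y', hseq₂, hyl, h'⟩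
    · exact .inl ⟨ha, .inl (.inr ⟨hy, bbisim_trans h' hk⟩)⟩
    · exact .inr ⟨yl, y', hseq'.trans (hseq₂.mono fun _ => .inr), hyl, .inr h'⟩

end TauClosed

section BPA

variable {V Act : Type} {G : BPA V Act} {τ : Act}

theorem BPA.not_tr_nil {a : Act} {u : List V} : ¬ G.tr [] a u := by
  rintro ⟨A, ξ, β, _, h, _⟩
  exact List.cons_ne_nil A β h.symm

theorem BPA.tr_append {s t : List V} {a : Act} (h : G.tr s a t) (γ : List V) :
    G.tr (s ++ γ) a (t ++ γ) := by
  obtain ⟨A, ξ, β, hr, rfl, rfl⟩ := h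
  exact ⟨A, ξ, β ++ γ, hr, rfl, List.append_assoc ξ β γ⟩

theorem BPA.exists_of_tr_append {δ γ u : List V} {a : Act} (h : G.tr (δ ++ γ) a u)
    (hδ : δ ≠ []) : ∃ δ', u = δ' ++ γ ∧ G.tr δ a δ' := by
  obtain ⟨A, ξ, β, hr, heq, rfl⟩ := h
  obtain ⟨B, δ, rfl⟩ := List.exists_cons_of_ne_nil hδ
  obtain ⟨rfl, rfl⟩ := List.cons_eq_cons.1 heq
  exact ⟨ξ ++ δ, by simp, B, ξ, δ, hr, rfl, rfl⟩

theorem BPA.steps_append {s t : List V} {w : List Act} (h : Steps G.tr s w t) (γ : List V) :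
    Steps G.tr (s ++ γ) w (t ++ γ) := by
  induction h with
  | refl => exact .refl _
  | step hstep _ ih => exact .step (BPA.tr_append hstep γ) ih

theorem BPA.Normed.exists_steps_nil (hG : G.Normed) (s : List V) : ∃ w, Steps G.tr s w [] := by
  induction s with
  | nil => exact ⟨[], .refl _⟩
  | cons A s ih =>
    obtain ⟨w₁, hw₁⟩ : ∃ w, Steps G.tr [A] w [] := by
      by_contra! hA
      exact hG A (sInf_eq_top.2 fun _ ⟨w, _, hw⟩ => absurd hw (hA w))
    obtain ⟨w₂, hw₂⟩ := ih
    exact ⟨w₁ ++ w₂, (BPA.steps_append hw₁ s).trans hw₂⟩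

theorem BPA.bbisim_prepend {x y : List V} (h : BBisim G.tr τ x y) (ζ : List V) :
    BBisim G.tr τ (ζ ++ x) (ζ ++ y) := by
  let R : List V → List V → Prop := fun u v =>
    ∃ ζ x y, BBisim G.tr τ x y ∧ u = ζ ++ x ∧ v = ζ ++ y
  refine bbisim_of_transfer_up_to (R := R) ?_ ?_ ⟨ζ, x, y, h, rfl, rfl⟩
  · rintro _ _ ⟨ζ, x, y, h, rfl, rfl⟩
    exact ⟨ζ, y, x, bbisim_symm h, rfl, rfl⟩
  rintro _ _ ⟨ζ, x, y, h, rfl, rfl⟩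
  rcases eq_or_ne ζ [] with rfl | hζ
  · exact h.transfer.mono fun _ _ => .inr
  intro a _ hs
  obtain ⟨ζ', rfl, hstep⟩ := BPA.exists_of_tr_append hs hζ
  exact .inr ⟨_, _, .refl _, BPA.tr_append hstep y, .inl ⟨ζ', x, y, h, rfl, rfl⟩⟩

theorem BPA.bbisim_append_of_forall_mem_redSet {δ γ : List V}
    (h : ∀ X ∈ δ, X ∈ RedSet G τ γ) : BBisim G.tr τ (δ ++ γ) γ := by
  induction δ with
  | nil => exact bbisim_refl γ
  | cons X δ ih =>
    have hδ := ih fun Y hY => h Y (List.mem_cons_of_mem X hY)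
    exact bbisim_trans (BPA.bbisim_prepend hδ [X]) (h X List.mem_cons_self)

theorem BPA.ccPath_split {δ ζ : List V} {n : ℕ} (h : CCPath G.tr τ (δ ++ ζ) n []) :
    ∃ k r, k + r = n ∧ CCPath G.tr τ (δ ++ ζ) k ζ ∧ CCPath G.tr τ ζ r [] := by
  generalize hs : δ ++ ζ = s at h
  generalize ht : ([] : List V) = t at h
  induction h generalizing δ with
  | refl =>
    subst hs
    obtain ⟨rfl, rfl⟩ := List.append_eq_nil_iff.1 ht.symm
    exact ⟨0, 0, rfl, .refl _, .refl _⟩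
  | stepEq hstep hbb hrest ih =>
    rcases eq_or_ne δ [] with rfl | hδ
    · subst hs ht
      exact ⟨0, _, Nat.zero_add _, .refl _, .stepEq hstep hbb hrest⟩
    subst hs
    obtain ⟨δ', rfl, -⟩ := BPA.exists_of_tr_append hstep hδ
    obtain ⟨k, r, rfl, hk, hr⟩ := ih rfl ht
    exact ⟨k, r, rfl, .stepEq hstep hbb hk, hr⟩
  | stepNe hstep hbb hrest ih =>
    rcases eq_or_ne δ [] with rfl | hδ
    · subst hs ht
      exact ⟨0, _, Nat.zero_add _, .refl _, .stepNe hstep hbb hrest⟩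
    subst hs
    obtain ⟨δ', rfl, -⟩ := BPA.exists_of_tr_append hstep hδ
    obtain ⟨k, r, rfl, hk, hr⟩ := ih rfl ht
    exact ⟨k + 1, r, Nat.add_right_comm k 1 r, .stepNe hstep hbb hk, hr⟩

theorem BPA.Normed.ccPath_nil_of_bbisim (hG : G.Normed) {s t : List V} {n : ℕ}
    (h : CCPath G.tr τ s n []) (hst : BBisim G.tr τ s t) : CCPath G.tr τ t n [] := by
  obtain ⟨t', ht, ht'⟩ := h.transfer hst
  obtain ⟨w, hw⟩ := hG.exists_steps_nil t'
  exact ht.trans (CCPath.zero_of_steps_of_bbisim_dead hw (bbisim_symm ht')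
    fun _ _ => BPA.not_tr_nil)

/-- On a path from `βηγ` to `ε` with the fewest class changes, the part from `γ` on already
needs that many (as `γ ~ βηγ`), so the part from `βηγ` to `ηγ` changes no class. -/
theorem BPA.Normed.bbisim_append_of_bbisim_append_append (hG : G.Normed) {β η γ : List V}
    (h : BBisim G.tr τ (β ++ (η ++ γ)) γ) : BBisim G.tr τ (η ++ γ) γ := by
  classical
  have hex : ∃ n, CCPath G.tr τ (β ++ (η ++ γ)) n [] := by
    obtain ⟨w, hw⟩ := hG.exists_steps_nil (β ++ (η ++ γ))
    exact CCPath.exists_of_steps hw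
  obtain ⟨k₁, r₁, hkr₁, hk₁, hr₁⟩ := BPA.ccPath_split (Nat.find_spec hex)
  obtain ⟨k₂, r₂, hkr₂, -, hr₂⟩ := BPA.ccPath_split (δ := η) hr₁
  have hmin := Nat.find_min' hex (hG.ccPath_nil_of_bbisim hr₂ (bbisim_symm h))
  obtain rfl : k₁ = 0 := by omega
  exact bbisim_trans (bbisim_symm hk₁.bbisim_of_zero) h

theorem BPA.Normed.forall_mem_redSet_of_bbisim_append (hG : G.Normed) {δ γ : List V}
    (h : BBisim G.tr τ (δ ++ γ) γ) : ∀ X ∈ δ, X ∈ RedSet G τ γ := by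
  intro X hX
  obtain ⟨β, η, rfl⟩ := List.append_of_mem hX
  have hXη : BBisim G.tr τ (X :: (η ++ γ)) γ :=
    hG.bbisim_append_of_bbisim_append_append (β := β) (η := X :: η) (by simpa using h)
  have hη := hG.bbisim_append_of_bbisim_append_append (β := [X]) hXη
  exact bbisim_trans (bbisim_symm (BPA.bbisim_prepend hη [X])) hXη

end BPA

section Relative

variable {V Act : Type} {G : BPA V Act} {τ : Act}

theorem BPA.exists_trR_of_tr_append {R : Set V} {δ γ u : List V} {a : Act}
    (hδ : ¬ ∀ X ∈ δ, X ∈ R) (h : G.tr (δ ++ γ) a u) :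
    ∃ δ', u = δ' ++ γ ∧ G.trR R δ a δ' := by
  obtain ⟨δ', rfl, h'⟩ := BPA.exists_of_tr_append h (by rintro rfl; simp at hδ)
  exact ⟨δ', rfl, h', hδ⟩

theorem BPA.exists_trR_of_bbisim {δ η γ u : List V} {a : Act}
    (hδ : ¬ BBisim G.tr τ (δ ++ γ) γ) (hη : BBisim G.tr τ (δ ++ γ) (η ++ γ))
    (h : G.tr (η ++ γ) a u) : ∃ η', u = η' ++ γ ∧ G.trR (RedSet G τ γ) η a η' :=
  BPA.exists_trR_of_tr_append
    (fun hR => hδ (bbisim_trans hη (BPA.bbisim_append_of_forall_mem_redSet hR))) h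

theorem BPA.exists_tauSeq_trR_of_tauSeq {δ η γ t : List V} (hδ : ¬ BBisim G.tr τ (δ ++ γ) γ)
    (h : TauSeq G.tr τ (BBisim G.tr τ) (δ ++ γ) (η ++ γ) t)
    (hη : BBisim G.tr τ (δ ++ γ) (η ++ γ)) :
    ∃ η', t = η' ++ γ ∧ TauSeq (G.trR (RedSet G τ γ)) τ
      (fun p q => BBisim G.tr τ (p ++ γ) (q ++ γ)) δ η η' := by
  generalize hs : η ++ γ = s at h
  induction h generalizing η with
  | refl => exact ⟨η, hs.symm, .refl η⟩
  | step hstep hB _ ih =>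
    subst hs
    obtain ⟨η₁, rfl, hstep'⟩ := BPA.exists_trR_of_bbisim hδ hη hstep
    obtain ⟨η', rfl, hseq⟩ := ih hB rfl
    exact ⟨η', rfl, .step hstep' hB hseq⟩

theorem BPA.Normed.relBBisim_of_bbisim_append (hG : G.Normed) {α β γ : List V}
    (h : BBisim G.tr τ (α ++ γ) (β ++ γ)) : BBisim (G.trR (RedSet G τ γ)) τ α β := by
  refine ⟨fun δ η => BBisim G.tr τ (δ ++ γ) (η ++ γ),
    isBranchingBisim_of_symm (fun _ _ => bbisim_symm) ?_, h⟩
  rintro δ η hδη a δ' ⟨hstep, hδ⟩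
  have hδγ : ¬ BBisim G.tr τ (δ ++ γ) γ := fun h' =>
    hδ (hG.forall_mem_redSet_of_bbisim_append h')
  rcases hδη.transfer a _ (BPA.tr_append hstep γ) with h' | ⟨tk, t', hseq, htk, h'⟩
  · exact .inl h'
  obtain ⟨ηk, rfl, hseq'⟩ := BPA.exists_tauSeq_trR_of_tauSeq hδγ hseq hδη
  obtain ⟨η', rfl, hstep'⟩ := BPA.exists_trR_of_bbisim hδγ (hseq.rel_end hδη) htk
  exact .inr ⟨ηk, η', hseq', hstep', h'⟩

theorem BPA.tauSeq_append_of_trR {R : Set V} {Rel Rel' : List V → List V → Prop}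
    {p q qk γ : List V} (hRel : ∀ v, Rel p v → Rel' (p ++ γ) (v ++ γ))
    (h : TauSeq (G.trR R) τ Rel p q qk) : TauSeq G.tr τ Rel' (p ++ γ) (q ++ γ) (qk ++ γ) := by
  induction h with
  | refl => exact .refl _
  | step hstep hB _ ih => exact .step (BPA.tr_append hstep.1 γ) (hRel _ hB) ih

/-- The states of `R_γ*` are deadlocked in `L_{G,R_γ}`, so a process equivalent to one of them
there can only `τ`-step, and only towards `R_γ*`. -/
theorem BPA.Normed.bbisim_append_of_relBBisim_redundant (hG : G.Normed) {ζ d γ : List V}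
    (h : BBisim (G.trR (RedSet G τ γ)) τ ζ d) (hd : ∀ X ∈ d, X ∈ RedSet G τ γ) :
    BBisim G.tr τ (ζ ++ γ) γ := by
  by_cases hζ : ∀ X ∈ ζ, X ∈ RedSet G τ γ
  · exact BPA.bbisim_append_of_forall_mem_redSet hζ
  refine bbisim_of_tau_closed (P := fun s => ∃ ζ, s = ζ ++ γ ∧
    BBisim (G.trR (RedSet G τ γ)) τ ζ d ∧ ¬ ∀ X ∈ ζ, X ∈ RedSet G τ γ) ?_ ?_ ⟨ζ, rfl, h, hζ⟩
  · rintro _ ⟨ζ, rfl, h, hζ⟩ a _ hs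
    obtain ⟨ζ', rfl, hstep⟩ := BPA.exists_trR_of_tr_append hζ hs
    obtain ⟨ha, h'⟩ := h.tr_of_dead (fun _ _ hd' => hd'.2 hd) hstep
    by_cases hζ' : ∀ X ∈ ζ', X ∈ RedSet G τ γ
    exacts [⟨ha, .inr (BPA.bbisim_append_of_forall_mem_redSet hζ')⟩,
      ⟨ha, .inl ⟨ζ', rfl, h', hζ'⟩⟩]
  · rintro _ ⟨ζ, rfl, -⟩
    obtain ⟨w, hw⟩ := hG.exists_steps_nil ζ
    exact ⟨w, γ, BPA.steps_append hw γ, bbisim_refl γ⟩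

theorem BPA.Normed.bbisim_append_of_relBBisim (hG : G.Normed) {α β γ : List V}
    (h : BBisim (G.trR (RedSet G τ γ)) τ α β) : BBisim G.tr τ (α ++ γ) (β ++ γ) := by
  let Rel : List V → List V → Prop := fun u v => ∃ p q, u = p ++ γ ∧ v = q ++ γ ∧
    BBisim (G.trR (RedSet G τ γ)) τ p q ∧
    (¬ ∀ X ∈ p, X ∈ RedSet G τ γ) ∧ ¬ ∀ X ∈ q, X ∈ RedSet G τ γ
  have hpair {p q : List V} (hpq : BBisim (G.trR (RedSet G τ γ)) τ p q) :
      Rel (p ++ γ) (q ++ γ) ∨ BBisim G.tr τ (p ++ γ) (q ++ γ) := by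
    by_cases hp : ∀ X ∈ p, X ∈ RedSet G τ γ
    · exact .inr (bbisim_trans (BPA.bbisim_append_of_forall_mem_redSet hp)
        (bbisim_symm (hG.bbisim_append_of_relBBisim_redundant (bbisim_symm hpq) hp)))
    by_cases hq : ∀ X ∈ q, X ∈ RedSet G τ γ
    · exact .inr (bbisim_trans (hG.bbisim_append_of_relBBisim_redundant hpq hq)
        (bbisim_symm (BPA.bbisim_append_of_forall_mem_redSet hq)))
    exact .inl ⟨p, q, rfl, rfl, hpq, hp, hq⟩
  refine (hpair h).elim (bbisim_of_transfer_up_to (R := Rel) ?_ ?_) id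
  · rintro _ _ ⟨p, q, rfl, rfl, hpq, hp, hq⟩
    exact ⟨q, p, rfl, rfl, bbisim_symm hpq, hq, hp⟩
  rintro _ _ ⟨p, q, rfl, rfl, hpq, hp, -⟩ a _ hs
  obtain ⟨p', rfl, hstep⟩ := BPA.exists_trR_of_tr_append hp hs
  rcases hpq.transfer a p' hstep with ⟨ha, h'⟩ | ⟨qk, q', hseq, hqk, h'⟩
  · exact .inl ⟨ha, hpair h'⟩
  · exact .inr ⟨qk ++ γ, q' ++ γ, BPA.tauSeq_append_of_trR (fun _ => hpair) hseq,
      BPA.tr_append hqk.1 γ, hpair h'⟩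

end Relative

/-- Proposition 4.3(3): `αγ ~ βγ` in `L_G` iff `α ~_{R_γ} β`,
i.e. `α` and `β` are branching bisimilar in `L_{G,R_γ}`. -/
theorem bbisim_append_iff_relative {V Act : Type} (G : BPA V Act) (τ : Act)
    (hG : G.Normed) (α β γ : List V) :
    BBisim G.tr τ (α ++ γ) (β ++ γ) ↔ BBisim (G.trR (RedSet G τ γ)) τ α β :=
  ⟨hG.relBBisim_of_bbisim_append, hG.bbisim_append_of_relBBisim⟩
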